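/- arXiv:1511.01678 — 4 statements merged into one kernel-verified Lean document; each statement's English description precedes it below -/
import Mathlib

section
/- Let Ω be either the bidisk 𝔻² or the unit ball 𝔹₂ in ℂ², and let Φ(z₁,z₂) = (z₁² + z₂², z₁² z₂²). Then Φ(Ω) is open and Φ : Ω → Φ(Ω) is a holomorphic proper map. -/
/-!
Write `Φ = σ ∘ q` with `q(z₁, z₂) = (z₁², z₂²)` and `σ(u, v) = (u + v, u v)`. Both factors are
open maps: `q` by the open mapping theorem in each coordinate, `σ` because the roots of
`X² - a X + b` depend continuously on `(a, b)`. Hence `Φ(Ω)` is open. A fibre of `Φ` consists of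
points whose coordinates have the same moduli up to order, and both domains are described by a
symmetric condition on these moduli, so `Φ⁻¹(Φ(Ω)) = Ω`. Then for compact `K ⊆ Φ(Ω)` the set
`Ω ∩ Φ⁻¹(K) = Φ⁻¹(K)` is closed and bounded, hence compact.
-/

open MeasureTheory Metric Set
open scoped ENNReal

noncomputable section

/-- Membership in the Bergman space `L²ₐ(Ω)` of a set `Ω ⊆ ℂᵈ`, as a function:
holomorphic on `Ω` and square integrable with respect to Lebesgue measure on `Ω`. -/
def BergmanMem {d : ℕ} (Ω : Set (Fin d → ℂ)) (f : (Fin d → ℂ) → ℂ) : Prop :=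
  AnalyticOnNhd ℂ f Ω ∧ MemLp f 2 (volume.restrict Ω)

/-- `E` is `L²ₐ`-removable in `Ω`: every function of the Bergman space of `Ω - E` extends
analytically to a function of the Bergman space of `Ω`. -/
def IsL2aRemovable {d : ℕ} (Ω E : Set (Fin d → ℂ)) : Prop :=
  ∀ f : (Fin d → ℂ) → ℂ, BergmanMem (Ω \ E) f →
    ∃ g : (Fin d → ℂ) → ℂ, BergmanMem Ω g ∧ EqOn g f (Ω \ E)

/-- `A` is locally `L²ₐ`-removable in `Ω`: near every point of `Ω` there are arbitrarily small
open domains `U` in which `U ∩ A` is `L²ₐ`-removable. -/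
def IsLocallyL2aRemovableIn {d : ℕ} (Ω A : Set (Fin d → ℂ)) : Prop :=
  ∀ lam ∈ Ω, ∀ ε > (0 : ℝ), ∃ U : Set (Fin d → ℂ),
    IsOpen U ∧ IsConnected U ∧ lam ∈ U ∧ U ⊆ ball lam ε ∧ IsL2aRemovable U (U ∩ A)

/-- A subset `J` of `ℂᵈ` is locally `L²ₐ`-removable: each point of `ℂᵈ` has a domain around it
in which `J` is locally `L²ₐ`-removable. -/
def IsLocallyL2aRemovable {d : ℕ} (J : Set (Fin d → ℂ)) : Prop :=
  ∀ lam : Fin d → ℂ, ∃ Ω : Set (Fin d → ℂ), IsOpen Ω ∧ IsConnected Ω ∧ lam ∈ Ω ∧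
    IsLocallyL2aRemovableIn Ω (J ∩ Ω)

/-- `E` is a zero variety of `Ω`: the zero set of a nonconstant holomorphic function on `Ω`. -/
def IsZeroVariety {d : ℕ} (Ω E : Set (Fin d → ℂ)) : Prop :=
  ∃ f : (Fin d → ℂ) → ℂ, AnalyticOnNhd ℂ f Ω ∧ (¬ ∃ c : ℂ, EqOn f (fun _ => c) Ω) ∧
    E = {z ∈ Ω | f z = 0}

/-- `E` is a good zero variety of `Ω`: a zero variety such that near each point of the closure
of `Ω`, the closure of `E` is cut out of `closure Ω` by a locally defined holomorphic function. -/
def IsGoodZeroVariety {d : ℕ} (Ω E : Set (Fin d → ℂ)) : Prop :=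
  IsZeroVariety Ω E ∧ ∀ lam ∈ closure Ω, ∃ r > (0 : ℝ), ∃ h : (Fin d → ℂ) → ℂ,
    AnalyticOnNhd ℂ h (ball lam r) ∧
    ball lam r ∩ closure E = {z ∈ ball lam r ∩ closure Ω | h z = 0}

/-- `F` is a holomorphic proper map on `Ω`: `F` is holomorphic on `Ω`, its image `F(Ω)` is open,
and `F : Ω → F(Ω)` is proper, i.e. preimages (within `Ω`) of compact subsets of `F(Ω)` are
compact. -/
def IsHolomorphicProperMapOn {d : ℕ} (F : (Fin d → ℂ) → Fin d → ℂ) (Ω : Set (Fin d → ℂ)) :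
    Prop :=
  AnalyticOnNhd ℂ F Ω ∧ IsOpen (F '' Ω) ∧
    ∀ K : Set (Fin d → ℂ), K ⊆ F '' Ω → IsCompact K → IsCompact {z ∈ Ω | F z ∈ K}

section SymmetricFunctions

variable {K : Type*}

lemma eq_and_eq_or_eq_and_eq_of_add_eq_of_mul_eq [CommRing K] [NoZeroDivisors K]
    {x y x' y' : K} (hadd : x + y = x' + y') (hmul : x * y = x' * y') :
    (x = x' ∧ y = y') ∨ (x = y' ∧ y = x') := by
  have h : (x - x') * (x - y') = 0 := by linear_combination x * hadd - hmul
  rcases mul_eq_zero.mp h with h | h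
  · exact Or.inl ⟨by linear_combination h, by linear_combination hadd - h⟩
  · exact Or.inr ⟨by linear_combination h, by linear_combination hadd - h⟩

variable [NormedField K]

lemma norm_le_of_sq_eq_mul_sub {a b u : K} (h : u ^ 2 = a * u - b) :
    ‖u‖ ≤ 1 + ‖a‖ + ‖b‖ := by
  rcases le_or_gt ‖u‖ 1 with hu | hu
  · linarith [norm_nonneg a, norm_nonneg b]
  have : ‖u‖ * ‖u‖ ≤ (‖a‖ + ‖b‖) * ‖u‖ :=
    calc ‖u‖ * ‖u‖ = ‖a * u - b‖ := by rw [← norm_mul, ← sq, h]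
      _ ≤ ‖a‖ * ‖u‖ + ‖b‖ := by rw [← norm_mul]; exact norm_sub_le _ _
      _ ≤ (‖a‖ + ‖b‖) * ‖u‖ := by nlinarith [norm_nonneg b]
  nlinarith

open Polynomial in
lemma exists_sq_eq_mul_sub [IsAlgClosed K] (a b : K) : ∃ u : K, u ^ 2 = a * u - b := by
  have hdeg : (X ^ 2 - C a * X + C b).degree = 2 := by compute_degree!
  obtain ⟨u, hu⟩ := IsAlgClosed.exists_root (X ^ 2 - C a * X + C b) (by rw [hdeg]; decide)
  exact ⟨u, by simp at hu; linear_combination hu⟩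

theorem exists_add_eq_mul_eq_near [IsAlgClosed K] (u₀ v₀ : K) {ε : ℝ} (hε : 0 < ε) :
    ∃ δ > 0, ∀ a b : K, ‖a - (u₀ + v₀)‖ < δ → ‖b - u₀ * v₀‖ < δ →
      ∃ u v, u + v = a ∧ u * v = b ∧ ‖u - u₀‖ < ε ∧ ‖v - v₀‖ < ε := by
  set M := 3 + ‖u₀ + v₀‖ + ‖u₀ * v₀‖
  have hM : 0 < M + 1 := by positivity
  refine ⟨min 1 (min (ε / 2) ((ε / 2) ^ 2 / (M + 1))), by positivity, fun a b ha hb => ?_⟩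
  simp only [lt_min_iff] at ha hb
  obtain ⟨u, hu⟩ := exists_sq_eq_mul_sub a b
  have hsum_near (x y x₀ y₀ : K) (hxy : x + y = a) (h₀ : x₀ + y₀ = u₀ + v₀)
      (hx : ‖x - x₀‖ < ε / 2) : ‖y - y₀‖ < ε := by
    have : y - y₀ = (a - (u₀ + v₀)) - (x - x₀) := by rw [← hxy, ← h₀]; ring
    linarith [norm_sub_le (a - (u₀ + v₀)) (x - x₀), congrArg norm this]
  have hu_le : ‖u‖ ≤ M := by
    have := norm_le_of_sq_eq_mul_sub hu
    linarith [norm_le_norm_add_norm_sub' a (u₀ + v₀), norm_le_norm_add_norm_sub' b (u₀ * v₀)]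
  -- `u` is nearly a root of `(X - u₀) (X - v₀)`, so it is close to `u₀` or to `v₀`
  have hprod : ‖u - u₀‖ * ‖u - v₀‖ < (ε / 2) ^ 2 :=
    calc ‖u - u₀‖ * ‖u - v₀‖ = ‖(a - (u₀ + v₀)) * u - (b - u₀ * v₀)‖ := by
          rw [← norm_mul]; congr 1; linear_combination hu
      _ ≤ ‖a - (u₀ + v₀)‖ * M + ‖b - u₀ * v₀‖ :=
          (norm_sub_le _ _).trans (by rw [norm_mul]; gcongr)
      _ < (ε / 2) ^ 2 / (M + 1) * M + (ε / 2) ^ 2 / (M + 1) := by gcongr; linarith; linarith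
      _ = (ε / 2) ^ 2 := by field_simp
  by_cases hu₀ : ‖u - u₀‖ < ε / 2
  · exact ⟨u, a - u, by ring, by linear_combination -hu, by linarith,
      hsum_near u (a - u) u₀ v₀ (by ring) rfl hu₀⟩
  · have hv₀ : ‖u - v₀‖ < ε / 2 := by
      by_contra h
      nlinarith [mul_le_mul (not_lt.1 hu₀) (not_lt.1 h) (by positivity) (norm_nonneg _)]
    exact ⟨a - u, u, by ring, by linear_combination -hu,
      hsum_near u (a - u) v₀ u₀ (by ring) (add_comm _ _) hv₀, by linarith⟩

theorem isOpenMap_add_mul [IsAlgClosed K] :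
    IsOpenMap fun p : K × K => (p.1 + p.2, p.1 * p.2) := by
  refine isOpenMap_iff_nhds_le.2 fun p => ?_
  rw [nhds_basis_ball.le_basis_iff (nhds_basis_ball.map _)]
  intro ε hε
  obtain ⟨δ, hδ, hroots⟩ := exists_add_eq_mul_eq_near p.1 p.2 hε
  refine ⟨δ, hδ, fun ⟨a, b⟩ hq => ?_⟩
  simp only [mem_ball, Prod.dist_eq, max_lt_iff] at hq
  obtain ⟨u, v, rfl, rfl, hu, hv⟩ :=
    hroots a b (dist_eq_norm a _ ▸ hq.1) (dist_eq_norm b _ ▸ hq.2)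
  refine ⟨(u, v), ?_, rfl⟩
  rw [mem_ball, Prod.dist_eq, dist_eq_norm, dist_eq_norm]
  exact max_lt hu hv

end SymmetricFunctions

theorem isOpenMap_pow_complex {n : ℕ} (hn : n ≠ 0) : IsOpenMap fun z : ℂ => z ^ n := by
  refine ((analyticOnNhd_id.pow n).is_constant_or_isOpenMap).resolve_left ?_
  rintro ⟨w, hw⟩
  simpa [hn] using (hw 0).trans (hw 1).symm

def phi (z : Fin 2 → ℂ) : Fin 2 → ℂ := ![z 0 ^ 2 + z 1 ^ 2, z 0 ^ 2 * z 1 ^ 2]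

theorem isOpenMap_phi : IsOpenMap phi := by
  have hphi : phi = Homeomorph.finTwoArrow.symm ∘ (fun p : ℂ × ℂ => (p.1 + p.2, p.1 * p.2)) ∘
      Prod.map (· ^ 2) (· ^ 2) ∘ Homeomorph.finTwoArrow := rfl
  rw [hphi]
  exact Homeomorph.finTwoArrow.symm.isOpenMap.comp <| isOpenMap_add_mul.comp <|
    ((isOpenMap_pow_complex two_ne_zero).prodMap (isOpenMap_pow_complex two_ne_zero)).comp
      Homeomorph.finTwoArrow.isOpenMap

theorem analyticAt_phi (z : Fin 2 → ℂ) : AnalyticAt ℂ phi z := by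
  have hcoord (i : Fin 2) : AnalyticAt ℂ (fun z : Fin 2 → ℂ => z i) z :=
    (ContinuousLinearMap.proj (R := ℂ) i).analyticAt z
  refine analyticAt_pi_iff.2 fun i => ?_
  fin_cases i
  · exact ((hcoord 0).pow 2).add ((hcoord 1).pow 2)
  · exact ((hcoord 0).pow 2).mul ((hcoord 1).pow 2)

theorem continuous_phi : Continuous phi := by
  unfold phi; fun_prop

lemma norm_eq_or_of_phi_eq {z w : Fin 2 → ℂ} (h : phi w = phi z) :
    (‖w 0‖ = ‖z 0‖ ∧ ‖w 1‖ = ‖z 1‖) ∨ (‖w 0‖ = ‖z 1‖ ∧ ‖w 1‖ = ‖z 0‖) := by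
  have norm_eq {c d : ℂ} (hcd : c ^ 2 = d ^ 2) : ‖c‖ = ‖d‖ :=
    (pow_left_inj₀ (norm_nonneg c) (norm_nonneg d) two_ne_zero).1 <| by
      rw [← norm_pow, hcd, norm_pow]
  have hadd : w 0 ^ 2 + w 1 ^ 2 = z 0 ^ 2 + z 1 ^ 2 := congrFun h 0
  have hmul : w 0 ^ 2 * w 1 ^ 2 = z 0 ^ 2 * z 1 ^ 2 := congrFun h 1
  rcases eq_and_eq_or_eq_and_eq_of_add_eq_of_mul_eq hadd hmul with ⟨h0, h1⟩ | ⟨h0, h1⟩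
  · exact .inl ⟨norm_eq h0, norm_eq h1⟩
  · exact .inr ⟨norm_eq h0, norm_eq h1⟩

lemma preimage_image_phi_subset {P : ℝ → ℝ → Prop} (hP : ∀ x y, P x y → P y x) :
    phi ⁻¹' (phi '' {z | P ‖z 0‖ ‖z 1‖}) ⊆ {z | P ‖z 0‖ ‖z 1‖} := by
  rintro w ⟨z, hz, hzw⟩
  rcases norm_eq_or_of_phi_eq hzw.symm with ⟨h0, h1⟩ | ⟨h0, h1⟩
  · simpa only [mem_ofPred_eq, h0, h1] using hz
  · simpa only [mem_ofPred_eq, h0, h1] using hP _ _ hz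

theorem isCompact_sep_of_preimage_image_subset {X Y : Type*} [PseudoMetricSpace X]
    [ProperSpace X] [TopologicalSpace Y] [T2Space Y] {f : X → Y} (hf : Continuous f) {Ω : Set X}
    (hΩ : Bornology.IsBounded Ω) (hsat : f ⁻¹' (f '' Ω) ⊆ Ω) {K : Set Y} (hK : K ⊆ f '' Ω)
    (hKc : IsCompact K) : IsCompact {z ∈ Ω | f z ∈ K} := by
  have hpre : {z ∈ Ω | f z ∈ K} = f ⁻¹' K :=
    Subset.antisymm (fun z hz => hz.2) fun z hz => ⟨hsat (hK hz), hz⟩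
  rw [hpre]
  exact isCompact_of_isClosed_isBounded (hKc.isClosed.preimage hf)
    (hΩ.subset ((preimage_mono hK).trans hsat))

lemma setOf_norm_lt_one_and_norm_lt_one_eq_ball :
    {z : Fin 2 → ℂ | ‖z 0‖ < 1 ∧ ‖z 1‖ < 1} = ball 0 1 := by
  ext z
  simp [pi_norm_lt_iff one_pos, Fin.forall_fin_two]

/-- Let `Ω` be the bidisk `𝔻²` or the unit ball `𝔹₂` in `ℂ²`, and let
`Φ(z₁, z₂) = (z₁² + z₂², z₁² z₂²)`. Then `Φ(Ω)` is open and `Φ : Ω → Φ(Ω)` is a holomorphic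
proper map. -/
theorem phi_square_proper (Ω : Set (Fin 2 → ℂ))
    (hΩ : Ω = {z : Fin 2 → ℂ | ‖z 0‖ < 1 ∧ ‖z 1‖ < 1} ∨
      Ω = {z : Fin 2 → ℂ | ‖z 0‖ ^ 2 + ‖z 1‖ ^ 2 < 1}) :
    IsOpen ((fun z : Fin 2 → ℂ => ![z 0 ^ 2 + z 1 ^ 2, z 0 ^ 2 * z 1 ^ 2]) '' Ω) ∧
      IsHolomorphicProperMapOn (fun z : Fin 2 → ℂ => ![z 0 ^ 2 + z 1 ^ 2, z 0 ^ 2 * z 1 ^ 2])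
        Ω := by
  obtain ⟨hΩ_open, hΩ_bdd, hΩ_sat⟩ :
      IsOpen Ω ∧ Bornology.IsBounded Ω ∧ phi ⁻¹' (phi '' Ω) ⊆ Ω := by
    rcases hΩ with rfl | rfl
    · have hsat := preimage_image_phi_subset (P := fun x y => x < 1 ∧ y < 1) fun _ _ => And.symm
      rw [setOf_norm_lt_one_and_norm_lt_one_eq_ball] at hsat ⊢
      exact ⟨isOpen_ball, isBounded_ball, hsat⟩
    · refine ⟨isOpen_lt (by fun_prop) continuous_const, ?_,
        preimage_image_phi_subset (P := fun x y => x ^ 2 + y ^ 2 < 1) fun x y h => by linarith⟩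
      refine (isBounded_ball (x := 0) (r := 1)).subset fun z hz => ?_
      rw [← setOf_norm_lt_one_and_norm_lt_one_eq_ball]
      constructor <;> nlinarith [hz.out, norm_nonneg (z 0), norm_nonneg (z 1)]
  have h_image_open : IsOpen (phi '' Ω) := isOpenMap_phi Ω hΩ_open
  exact ⟨h_image_open, fun z _ => analyticAt_phi z, h_image_open, fun K hK hKc =>
    isCompact_sep_of_preimage_image_subset continuous_phi hΩ_bdd hΩ_sat hK hKc⟩

end
end

section
/- The holomorphic map Ψ : ℂ² → ℂ² defined by Ψ(z₁,z₂) = (z₁ + z₂, z₁ z₂) is an open map: it maps every open subset of ℂ² to an open subset of ℂ². -/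
open MeasureTheory Metric Set
open scoped ENNReal

noncomputable section

lemma sq_isOpenMap : IsOpenMap (fun z : ℂ => z * z) := by
  have h : AnalyticOnNhd ℂ (fun z : ℂ => z * z) Set.univ :=
    fun z _ => (analyticAt_id.mul analyticAt_id)
  rcases h.is_constant_or_isOpen isPreconnected_univ with ⟨w, hw⟩ | h
  · have h0 := hw 0 trivial
    have h1 := hw 1 trivial
    simp at h0 h1
    exact absurd (h0 ▸ h1) one_ne_zero
  · exact fun s hs => h s (Set.subset_univ s) hs

/-- The homeomorphism (z₁,z₂) ↦ (z₁+z₂, z₁−z₂). -/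
def f1 : ℂ × ℂ ≃ₜ ℂ × ℂ where
  toFun p := (p.1 + p.2, p.1 - p.2)
  invFun p := ((p.1 + p.2) / 2, (p.1 - p.2) / 2)
  left_inv p := by ext <;> simp <;> ring
  right_inv p := by ext <;> simp <;> ring
  continuous_toFun := by continuity
  continuous_invFun := by continuity

/-- The homeomorphism (u,w) ↦ (u, (u²−w)/4). -/
def h1 : ℂ × ℂ ≃ₜ ℂ × ℂ where
  toFun p := (p.1, (p.1 * p.1 - p.2) / 4)
  invFun p := (p.1, p.1 * p.1 - 4 * p.2)
  left_inv p := by ext <;> simp <;> ring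
  right_inv p := by ext <;> simp <;> ring
  continuous_toFun := by continuity
  continuous_invFun := by continuity

/-- The map `Ψ(z₁, z₂) = (z₁ + z₂, z₁ z₂)` is an open map on `ℂ²`. -/
theorem symm_map_isOpenMap :
    IsOpenMap (fun p : ℂ × ℂ => (p.1 + p.2, p.1 * p.2)) := by
  have hk : IsOpenMap (Prod.map (id : ℂ → ℂ) (fun z : ℂ => z * z)) :=
    IsOpenMap.id.prodMap sq_isOpenMap
  have h : IsOpenMap (h1 ∘ Prod.map (id : ℂ → ℂ) (fun z : ℂ => z * z) ∘ f1) :=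
    (h1.isOpenMap.comp hk).comp f1.isOpenMap
  convert h using 2 with p
  ext <;> simp [h1, f1] <;> ring
end
end

section
/- For d ≥ 1, let φ_k (1 ≤ k ≤ d) denote the elementary symmetric polynomials in the variables z₁,…,z_d (so φ₁ = z₁ + ⋯ + z_d, φ₂ = Σ_{i<j} z_i z_j, …, φ_d = z₁ z₂ ⋯ z_d), and let Φ = (φ₁,…,φ_d). Then Φ is an open map on ℂ^d; furthermore, if Ω is a bounded domain in ℂ^d invariant under all permutations of the coordinates, then Φ(Ω) is open and Φ : Ω → Φ(Ω) is a holomorphic proper map. -/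
open MeasureTheory Metric Set
open scoped ENNReal

noncomputable section

/-!
Up to sign, `Φ(z)` lists the coefficients of `∏ᵢ (X - zᵢ)`. Hence the fibres of `Φ` are the
orbits of the symmetric group (a monic polynomial determines its multiset of roots), `Φ` is
surjective (every monic polynomial over `ℂ` splits), and Cauchy's bound on roots gives
`‖z‖ ≤ ‖Φ(z)‖ + 1`, so `Φ` is proper. A proper continuous surjection is a quotient map, and
`Φ⁻¹(Φ(U))` is the union of the permuted copies of `U`, so `Φ` is open. For a permutation-invariant
`Ω` and compact `K ⊆ Φ(Ω)`, `{z ∈ Ω | Φ(z) ∈ K} = Φ⁻¹(K)`, compact by properness of `Φ`.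
-/

open Finset Polynomial

section Permutations

variable {ι β α : Type*} [Fintype ι] [Fintype β]

theorem map_univ_val_comp_equiv (f : β → α) (e : ι ≃ β) :
    univ.val.map (f ∘ e) = univ.val.map f := by
  rw [← Multiset.map_map, Multiset.map_univ_val_equiv]

theorem exists_map_univ_val_eq (s : Multiset α) (hs : Multiset.card s = Fintype.card ι) :
    ∃ w : ι → α, univ.val.map w = s := by
  classical
  let e : ι ≃ s := Fintype.equivOfCardEq (by rw [Multiset.card_coe, hs])
  exact ⟨(fun x : s => (x : α)) ∘ e, by rw [map_univ_val_comp_equiv, Multiset.map_univ_coe]⟩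

/-- Match the fibres over each value; they have the same size. -/
theorem exists_perm_of_map_univ_val_eq [DecidableEq α] {z w : ι → α}
    (h : univ.val.map z = univ.val.map w) : ∃ σ : Equiv.Perm ι, w ∘ σ = z := by
  have hcard (a : α) : Fintype.card {i // z i = a} = Fintype.card {i // w i = a} := by
    have hcount := congrArg (Multiset.count a) h
    simp only [Multiset.count_map, ← Finset.filter_val, Finset.card_val] at hcount
    simpa [Fintype.card_subtype, eq_comm] using hcount
  exact ⟨Equiv.ofFiberEquiv fun a => Fintype.equivOfCardEq (hcard a),
    funext (Equiv.ofFiberEquiv_map _)⟩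

end Permutations

section Vieta

variable {R : Type*} [CommRing R] {n : ℕ}

def vietaPoly (e : Fin (n + 1) → R) : R[X] :=
  ∑ j : Fin (n + 1), C ((-1) ^ (j : ℕ) * e j) * X ^ (n - j)

theorem prod_X_sub_C_eq_vietaPoly (s : Multiset R) (hs : Multiset.card s = n) :
    (s.map fun a => X - C a).prod = vietaPoly fun j : Fin (n + 1) => s.esymm j := by
  subst hs
  rw [Multiset.prod_X_sub_X_eq_sum_esymm, vietaPoly,
    ← Fin.sum_univ_eq_sum_range (fun j => (-1) ^ j * (C (s.esymm j) * X ^ (Multiset.card s - j)))]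
  simp [mul_assoc]

theorem coeff_vietaPoly (e : Fin (n + 1) → R) (j : Fin (n + 1)) :
    (vietaPoly e).coeff (n - j) = (-1) ^ (j : ℕ) * e j := by
  rw [vietaPoly, finsetSum_coeff, Finset.sum_eq_single j]
  · rw [coeff_C_mul_X_pow, if_pos rfl]
  · intro i _ hij
    rw [coeff_C_mul_X_pow, if_neg]
    omega
  · simp

theorem natDegree_vietaPoly_le (e : Fin (n + 1) → R) : (vietaPoly e).natDegree ≤ n :=
  natDegree_sum_le_of_forall_le _ _ fun j _ => (natDegree_C_mul_X_pow_le _ _).trans (by omega)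

theorem coeff_vietaPoly_self (e : Fin (n + 1) → R) : (vietaPoly e).coeff n = e 0 := by
  simpa using coeff_vietaPoly e 0

theorem monic_vietaPoly {e : Fin (n + 1) → R} (he : e 0 = 1) : (vietaPoly e).Monic :=
  monic_of_natDegree_le_of_coeff_eq_one n (natDegree_vietaPoly_le e) <| by
    rw [coeff_vietaPoly_self, he]

theorem natDegree_vietaPoly [Nontrivial R] {e : Fin (n + 1) → R} (he : e 0 = 1) :
    (vietaPoly e).natDegree = n :=
  natDegree_eq_of_le_of_coeff_ne_zero (natDegree_vietaPoly_le e) <| by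
    rw [coeff_vietaPoly_self, he]
    exact one_ne_zero

end Vieta

section Roots

variable {K : Type*} [Field K] [IsAlgClosed K] {n : ℕ} {e : Fin (n + 1) → K}

theorem card_roots_vietaPoly (he : e 0 = 1) : Multiset.card (vietaPoly e).roots = n := by
  rw [IsAlgClosed.card_roots_eq_natDegree, natDegree_vietaPoly he]

theorem esymm_roots_vietaPoly (he : e 0 = 1) (j : Fin (n + 1)) :
    (vietaPoly e).roots.esymm j = e j := by
  have hvieta := coeff_eq_esymm_roots_of_card
    ((card_roots_vietaPoly he).trans (natDegree_vietaPoly he).symm)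
    ((Nat.sub_le n j).trans (natDegree_vietaPoly he).ge)
  rw [coeff_vietaPoly, (monic_vietaPoly he).leadingCoeff, one_mul, natDegree_vietaPoly he,
    Nat.sub_sub_self (Nat.le_of_lt_succ j.is_lt)] at hvieta
  exact (mul_left_cancel₀ (pow_ne_zero _ (neg_ne_zero.2 one_ne_zero)) hvieta).symm

end Roots

section EsymmMap

variable (K : Type*) [Field K] (d : ℕ)

/-- Coordinate `k : Fin d` is `φ_{k+1}`. -/
def esymmMap (z : Fin d → K) (k : Fin d) : K :=
  MvPolynomial.eval z (MvPolynomial.esymm (Fin d) K ((k : ℕ) + 1))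

variable {K d}

theorem esymmMap_apply (z : Fin d → K) (k : Fin d) :
    esymmMap K d z k = (univ.val.map z).esymm ((k : ℕ) + 1) :=
  MvPolynomial.aeval_esymm_eq_multiset_esymm (Fin d) K _ z

theorem prod_X_sub_C_eq_vietaPoly_esymmMap (z : Fin d → K) :
    ((univ.val.map z).map fun a => X - C a).prod = vietaPoly (Fin.cons 1 (esymmMap K d z)) := by
  rw [prod_X_sub_C_eq_vietaPoly (n := d) _ (by simp)]
  congr 1
  funext j
  refine Fin.cases ?_ (fun k => ?_) j
  · simp [Multiset.esymm]
  · simp [esymmMap_apply]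

theorem roots_vietaPoly_esymmMap (z : Fin d → K) :
    (vietaPoly (Fin.cons 1 (esymmMap K d z))).roots = univ.val.map z := by
  rw [← prod_X_sub_C_eq_vietaPoly_esymmMap, roots_multiset_prod_X_sub_C]

theorem esymmMap_eq_esymmMap_iff {z w : Fin d → K} :
    esymmMap K d z = esymmMap K d w ↔ ∃ σ : Equiv.Perm (Fin d), w ∘ σ = z := by
  constructor
  · intro h
    classical
    apply exists_perm_of_map_univ_val_eq
    rw [← roots_vietaPoly_esymmMap, h, roots_vietaPoly_esymmMap]
  · rintro ⟨σ, rfl⟩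
    funext k
    rw [esymmMap_apply, esymmMap_apply, map_univ_val_comp_equiv]

theorem esymmMap_surjective [IsAlgClosed K] : Function.Surjective (esymmMap K d) := by
  intro c
  obtain ⟨w, hw⟩ := exists_map_univ_val_eq (vietaPoly (Fin.cons 1 c : Fin (d + 1) → K)).roots
    (by rw [card_roots_vietaPoly rfl, Fintype.card_fin])
  refine ⟨w, funext fun k => ?_⟩
  rw [esymmMap_apply, hw, ← Fin.val_succ, esymm_roots_vietaPoly rfl, Fin.cons_succ]

end EsymmMap

theorem cauchyBound_vietaPoly_cons_one_le {K : Type*} [NormedField K] {n : ℕ} (c : Fin n → K) :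
    cauchyBound (vietaPoly (Fin.cons 1 c : Fin (n + 1) → K)) ≤ ‖c‖₊ + 1 := by
  rw [cauchyBound, natDegree_vietaPoly rfl, (monic_vietaPoly rfl).leadingCoeff, nnnorm_one,
    div_one]
  gcongr
  refine Finset.sup_le fun k hkn => ?_
  have hk : k = n - ((Fin.succ ⟨n - 1 - k, by grind⟩ : Fin (n + 1)) : ℕ) := by
    simp only [Fin.val_succ]
    grind
  rw [hk, coeff_vietaPoly, Fin.cons_succ, nnnorm_mul, nnnorm_pow, nnnorm_neg, nnnorm_one, one_pow,
    one_mul]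
  exact nnnorm_le_pi_nnnorm c _

/-- Cauchy's bound for the roots of `∏ᵢ (X - wᵢ)`, whose coefficients are `± φₖ(w)`. -/
theorem norm_le_norm_esymmMap_add_one {K : Type*} [NormedField K] {d : ℕ} (w : Fin d → K) :
    ‖w‖ ≤ ‖esymmMap K d w‖ + 1 := by
  refine (pi_norm_le_iff_of_nonneg (by positivity)).2 fun i => ?_
  have hroot : (vietaPoly (Fin.cons 1 (esymmMap K d w))).IsRoot (w i) := by
    refine isRoot_of_mem_roots ?_
    rw [roots_vietaPoly_esymmMap]
    exact Multiset.mem_map_of_mem w (mem_univ_val i)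
  have hbound := (hroot.norm_lt_cauchyBound (monic_vietaPoly rfl).ne_zero).trans_le
    (cauchyBound_vietaPoly_cons_one_le _)
  exact_mod_cast hbound.le

section Complex

variable {d : ℕ}

theorem analyticOnNhd_esymmMap : AnalyticOnNhd ℂ (esymmMap ℂ d) univ :=
  AnalyticOnNhd.pi fun _ => AnalyticOnNhd.eval_mvPolynomial _

theorem continuous_esymmMap : Continuous (esymmMap ℂ d) :=
  continuousOn_univ.1 analyticOnNhd_esymmMap.continuousOn

theorem isProperMap_esymmMap : IsProperMap (esymmMap ℂ d) := by
  refine isProperMap_iff_isCompact_preimage.2 ⟨continuous_esymmMap, fun L hL => ?_⟩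
  obtain ⟨r, hr⟩ := isBounded_iff_forall_norm_le.1 hL.isBounded
  refine Metric.isCompact_of_isClosed_isBounded (hL.isClosed.preimage continuous_esymmMap)
    (isBounded_iff_forall_norm_le.2 ⟨r + 1, fun w hw => ?_⟩)
  linarith [norm_le_norm_esymmMap_add_one w, hr _ hw]

theorem preimage_image_esymmMap (U : Set (Fin d → ℂ)) :
    esymmMap ℂ d ⁻¹' (esymmMap ℂ d '' U) = ⋃ σ : Equiv.Perm (Fin d), (· ∘ σ) ⁻¹' U := by
  ext v
  simp only [Set.mem_preimage, Set.mem_image, Set.mem_iUnion, esymmMap_eq_esymmMap_iff]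
  constructor
  · rintro ⟨u, hu, σ, rfl⟩
    exact ⟨σ, hu⟩
  · rintro ⟨σ, hσ⟩
    exact ⟨_, hσ, σ, rfl⟩

theorem isOpenMap_esymmMap : IsOpenMap (esymmMap ℂ d) := by
  intro U hU
  have hquot : Topology.IsQuotientMap (esymmMap ℂ d) :=
    isProperMap_esymmMap.isClosedMap.isQuotientMap continuous_esymmMap esymmMap_surjective
  rw [← hquot.isOpen_preimage, preimage_image_esymmMap]
  exact isOpen_iUnion fun σ => hU.preimage (continuous_pi fun i => continuous_apply (σ i))

end Complex

theorem esymm_map_open_and_proper_general {d : ℕ} :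
    IsOpenMap (fun z : Fin d → ℂ =>
        fun k : Fin d => MvPolynomial.eval z (MvPolynomial.esymm (Fin d) ℂ ((k : ℕ) + 1))) ∧
      ∀ Ω : Set (Fin d → ℂ), IsOpen Ω → IsConnected Ω → Bornology.IsBounded Ω →
        (∀ σ : Equiv.Perm (Fin d), ∀ z ∈ Ω, (fun i => z (σ i)) ∈ Ω) →
        IsHolomorphicProperMapOn (fun z : Fin d → ℂ =>
          fun k : Fin d => MvPolynomial.eval z (MvPolynomial.esymm (Fin d) ℂ ((k : ℕ) + 1)))
          Ω := by
  refine ⟨isOpenMap_esymmMap, fun Ω hΩ _ _ hinv => ⟨analyticOnNhd_esymmMap.mono (subset_univ Ω),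
    isOpenMap_esymmMap Ω hΩ, fun L hL hLc => ?_⟩⟩
  change IsCompact {z ∈ Ω | esymmMap ℂ d z ∈ L}
  have hfiber : {z ∈ Ω | esymmMap ℂ d z ∈ L} = esymmMap ℂ d ⁻¹' L := by
    refine Subset.antisymm (fun z hz => hz.2) fun z hz => ⟨?_, hz⟩
    obtain ⟨v, hv, hvz⟩ := hL hz
    obtain ⟨σ, rfl⟩ := esymmMap_eq_esymmMap_iff.1 hvz.symm
    exact hinv σ v hv
  rw [hfiber]
  exact isProperMap_esymmMap.isCompact_preimage hLc

/-- The map `Φ = (φ₁, …, φ_d)` built from the elementary symmetric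
polynomials is an open map on `ℂᵈ`; moreover, if `Ω` is a bounded domain invariant under all
permutations of the coordinates, then `Φ(Ω)` is open and `Φ : Ω → Φ(Ω)` is a holomorphic
proper map. -/
theorem esymm_map_open_and_proper {d : ℕ} (hd : 1 ≤ d) :
    IsOpenMap (fun z : Fin d → ℂ =>
        fun k : Fin d => MvPolynomial.eval z (MvPolynomial.esymm (Fin d) ℂ ((k : ℕ) + 1))) ∧
      ∀ Ω : Set (Fin d → ℂ), IsOpen Ω → IsConnected Ω → Bornology.IsBounded Ω →
        (∀ σ : Equiv.Perm (Fin d), ∀ z ∈ Ω, (fun i => z (σ i)) ∈ Ω) →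
        IsHolomorphicProperMapOn (fun z : Fin d → ℂ =>
          fun k : Fin d => MvPolynomial.eval z (MvPolynomial.esymm (Fin d) ℂ ((k : ℕ) + 1)))
          Ω :=
  esymm_map_open_and_proper_general

end
end

section
/- Let H be a Hilbert space and let e_λ^k, f_λ^k (1 ≤ k ≤ n, λ ∈ Λ) be vectors in H satisfying Σ_{k=1}^n e_λ^k ⊗ e_μ^k = Σ_{k=1}^n f_λ^k ⊗ f_μ^k for all λ, μ ∈ Λ. Then there is an n×n numerical unitary matrix W such that W (e_λ^1, …, e_λ^n)ᵀ = (f_λ^1, …, f_λ^n)ᵀ for every λ ∈ Λ. -/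
/-!
For `v ∈ H` put `c_e(λ, v) = (⟨v, e_λ^k⟩)_k ∈ ℂⁿ`. Pairing the operator identity with `u` and `v`
says exactly that the families `c_e` and `c_f`, indexed by `Λ × H`, have the same Gram matrix.
Hence some linear isometry `U` of `ℂⁿ` maps `c_e(λ, v)` to `c_f(λ, v)` for all `λ, v`; its
matrix `W` is unitary, and `c_f(λ, v) = W c_e(λ, v)` for every `v` means `f_λ = W e_λ`.
-/

noncomputable section

/-- The rank-one operator `x ⊗ y` on a complex Hilbert space, `(x ⊗ y) u = ⟨u, y⟩ x`
(inner product linear in `u`). -/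
def rankOne {H : Type*} [NormedAddCommGroup H] [InnerProductSpace ℂ H] (x y : H) :
    H →L[ℂ] H :=
  (innerSL ℂ y).smulRight x

open scoped InnerProductSpace

section GramMatrix

open Finsupp

variable {𝕜 V ι : Type*} [RCLike 𝕜] [NormedAddCommGroup V] [InnerProductSpace 𝕜 V]

theorem inner_linearCombination_eq_of_inner_eq {x y : ι → V}
    (h : ∀ i j, ⟪x i, x j⟫_𝕜 = ⟪y i, y j⟫_𝕜) (c d : ι →₀ 𝕜) :
    ⟪linearCombination 𝕜 x c, linearCombination 𝕜 x d⟫_𝕜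
      = ⟪linearCombination 𝕜 y c, linearCombination 𝕜 y d⟫_𝕜 := by
  simp only [linearCombination_apply, Finsupp.sum_inner, Finsupp.inner_sum, inner_smul_left,
    inner_smul_right, h]

theorem ker_linearCombination_le_of_inner_eq {x y : ι → V}
    (h : ∀ i j, ⟪x i, x j⟫_𝕜 = ⟪y i, y j⟫_𝕜) :
    LinearMap.ker (linearCombination 𝕜 x) ≤ LinearMap.ker (linearCombination 𝕜 y) := by
  intro c hc
  rw [LinearMap.mem_ker] at hc ⊢
  rw [← inner_self_eq_zero (𝕜 := 𝕜), ← inner_linearCombination_eq_of_inner_eq h, hc,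
    inner_zero_left]

/-- By the kernel inclusion, `x i ↦ y i` is a well-defined isometry on the span of `x`;
it extends to all of `V` since `V` is finite-dimensional. -/
theorem exists_linearIsometry_of_inner_eq [FiniteDimensional 𝕜 V] {x y : ι → V}
    (h : ∀ i j, ⟪x i, x j⟫_𝕜 = ⟪y i, y j⟫_𝕜) :
    ∃ U : V →ₗᵢ[𝕜] V, ∀ i, U (x i) = y i := by
  set A := linearCombination 𝕜 x
  set B := linearCombination 𝕜 y
  let T : LinearMap.range A →ₗ[𝕜] V :=
    (LinearMap.ker A).liftQ B (ker_linearCombination_le_of_inner_eq h) ∘ₗ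
      A.quotKerEquivRange.symm.toLinearMap
  have hT : ∀ c, T (A.rangeRestrict c) = B c := fun c => by
    have hmk : A.quotKerEquivRange (Submodule.Quotient.mk c) = A.rangeRestrict c := rfl
    simp [T, ← hmk]
  have hT_norm : ∀ s, ‖T s‖ = ‖s‖ := by
    rintro ⟨_, c, rfl⟩
    change ‖T (A.rangeRestrict c)‖ = ‖A c‖
    rw [hT, @norm_eq_sqrt_re_inner 𝕜, @norm_eq_sqrt_re_inner 𝕜,
      inner_linearCombination_eq_of_inner_eq h]
  let U := LinearIsometry.extend ⟨T, hT_norm⟩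
  refine ⟨U, fun i => ?_⟩
  calc U (x i) = U (A.rangeRestrict (single i 1)) := by simp [A]
    _ = T (A.rangeRestrict (single i 1)) := LinearIsometry.extend_apply _ _
    _ = y i := by simp [hT, B]

end GramMatrix

theorem LinearIsometry.toEuclideanLin_symm_mem_unitaryGroup {𝕜 ι : Type*} [RCLike 𝕜]
    [Fintype ι] [DecidableEq ι] (U : EuclideanSpace 𝕜 ι →ₗᵢ[𝕜] EuclideanSpace 𝕜 ι) :
    Matrix.toEuclideanLin.symm U.toLinearMap ∈ Matrix.unitaryGroup ι 𝕜 := by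
  rw [Matrix.toEuclideanLin_eq_toLin_orthonormal]
  exact (U.toLinearIsometryEquiv rfl).toMatrix_mem_unitaryGroup _ _

section InnerCoords

variable {𝕜 V ι κ : Type*} [RCLike 𝕜] [NormedAddCommGroup V] [InnerProductSpace 𝕜 V]

variable (𝕜) in
/-- The coordinates `⟪v, g k⟫` are linear in the family `g`, so that mixing the family by a
matrix acts on them by that same matrix (`innerCoords_sum_smul`). -/
def innerCoords (g : ι → V) (v : V) : EuclideanSpace 𝕜 ι :=
  WithLp.toLp 2 fun k => ⟪v, g k⟫_𝕜

theorem eq_of_forall_innerCoords_eq {g g' : ι → V}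
    (h : ∀ v, innerCoords 𝕜 g v = innerCoords 𝕜 g' v) : g = g' :=
  funext fun k => ext_inner_left 𝕜 fun v => congrFun (congrArg WithLp.ofLp (h v)) k

theorem innerCoords_sum_smul [Fintype ι] [DecidableEq ι] (W : Matrix κ ι 𝕜) (g : ι → V)
    (v : V) :
    innerCoords 𝕜 (fun i => ∑ j, W i j • g j) v
      = Matrix.toEuclideanLin W (innerCoords 𝕜 g v) := by
  ext i
  simp [innerCoords, Matrix.mulVec, dotProduct, inner_sum, inner_smul_right]

end InnerCoords

theorem inner_sum_rankOne_apply {H ι : Type*} [NormedAddCommGroup H] [InnerProductSpace ℂ H]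
    [Fintype ι] (a b : ι → H) (u v : H) :
    ⟪v, (∑ k, rankOne (a k) (b k)) u⟫_ℂ = ⟪innerCoords ℂ b u, innerCoords ℂ a v⟫_ℂ := by
  simp [rankOne, innerCoords, PiLp.inner_apply, mul_comm]

theorem exists_unitary_of_rankOne_sums_eq_general {H : Type*} [NormedAddCommGroup H]
    [InnerProductSpace ℂ H] {Λ : Type*} {n : ℕ}
    (e f : Λ → Fin n → H)
    (h : ∀ lam mu : Λ,
      ∑ k : Fin n, rankOne (e lam k) (e mu k) = ∑ k : Fin n, rankOne (f lam k) (f mu k)) :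
    ∃ W : Matrix (Fin n) (Fin n) ℂ, W ∈ Matrix.unitaryGroup (Fin n) ℂ ∧
      ∀ (lam : Λ) (i : Fin n), f lam i = ∑ j : Fin n, W i j • e lam j := by
  have gram : ∀ p q : Λ × H,
      ⟪innerCoords ℂ (e p.1) p.2, innerCoords ℂ (e q.1) q.2⟫_ℂ
        = ⟪innerCoords ℂ (f p.1) p.2, innerCoords ℂ (f q.1) q.2⟫_ℂ := by
    rintro ⟨mu, u⟩ ⟨lam, v⟩
    rw [← inner_sum_rankOne_apply, ← inner_sum_rankOne_apply, h]
  obtain ⟨U, hU⟩ := exists_linearIsometry_of_inner_eq gram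
  refine ⟨_, U.toEuclideanLin_symm_mem_unitaryGroup, fun lam => congrFun ?_⟩
  refine eq_of_forall_innerCoords_eq (𝕜 := ℂ) fun v => ?_
  rw [innerCoords_sum_smul, LinearEquiv.apply_symm_apply]
  exact (hU (lam, v)).symm

/-- If vectors `e_λ^k`, `f_λ^k` (`1 ≤ k ≤ n`, `λ ∈ Λ`) of a Hilbert space
satisfy `∑ₖ e_λ^k ⊗ e_μ^k = ∑ₖ f_λ^k ⊗ f_μ^k` for all `λ, μ ∈ Λ`, then there is an `n × n`
unitary matrix `W` with `W (e_λ^1, …, e_λ^n)ᵀ = (f_λ^1, …, f_λ^n)ᵀ` for all `λ`. -/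
theorem exists_unitary_of_rankOne_sums_eq {H : Type*} [NormedAddCommGroup H]
    [InnerProductSpace ℂ H] [CompleteSpace H] {Λ : Type*} {n : ℕ}
    (e f : Λ → Fin n → H)
    (h : ∀ lam mu : Λ,
      ∑ k : Fin n, rankOne (e lam k) (e mu k) = ∑ k : Fin n, rankOne (f lam k) (f mu k)) :
    ∃ W : Matrix (Fin n) (Fin n) ℂ, W ∈ Matrix.unitaryGroup (Fin n) ℂ ∧
      ∀ (lam : Λ) (i : Fin n), f lam i = ∑ j : Fin n, W i j • e lam j :=
  exists_unitary_of_rankOne_sums_eq_general e f h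
end
end
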